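/- For univariate Gaussians G1 = N(μ1,σ1²) and G2 = N(μ2,σ2²), with σmax = max{σ1,σ2}, the squared Hellinger distance satisfies dH(G1,G2)² ≥ dH(N(μ1,σmax²), N(μ2,σmax²))² and dH(G1,G2)² ≥ dH(N(0,σ1²), N(0,σ2²))². -/

import Mathlib

open Real MeasureTheory

/-- Density of the univariate Gaussian `N(μ, σ²)`. -/
noncomputable def gpdf (μ σ x : ℝ) : ℝ :=
  (1 / (σ * Real.sqrt (2 * π))) * Real.exp (-((x - μ) ^ 2) / (2 * σ ^ 2))

/-- Squared Hellinger distance between the univariate Gaussians `N(μ₁,σ₁²)` and `N(μ₂,σ₂²)`,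
defined via their Lebesgue densities: `dH² = (1/2) ∫ (√p - √q)² dx`. -/
noncomputable def hellingerSqGaussian (μ₁ σ₁ μ₂ σ₂ : ℝ) : ℝ :=
  (1 / 2) * ∫ x : ℝ, (Real.sqrt (gpdf μ₁ σ₁ x) - Real.sqrt (gpdf μ₂ σ₂ x)) ^ 2

/-! By completing the square, `∫ √p √q` equals `√(2σ₁σ₂/(σ₁²+σ₂²)) · exp(-(μ₁-μ₂)²/(4(σ₁²+σ₂²)))`,
and since `p`, `q` have mass one, `dH² = 1 - ∫ √p √q`. The first factor is at most `1` (AM–GM)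
and equals `1` when `σ₁ = σ₂ = max σ₁ σ₂`, while the exponential factor grows with the variances
and is largest, namely `1`, for equal means. -/

theorem integrable_exp_neg_mul_sub_sq {b : ℝ} (hb : 0 < b) (c : ℝ) :
    Integrable fun x : ℝ ↦ exp (-(b * (x - c) ^ 2)) := by
  simpa only [neg_mul] using (integrable_exp_neg_mul_sq hb).comp_sub_right c

theorem integral_exp_neg_mul_sub_sq (b c : ℝ) :
    ∫ x : ℝ, exp (-(b * (x - c) ^ 2)) = √(π / b) := by
  rw [integral_sub_right_eq_self (fun y ↦ exp (-(b * y ^ 2))) c]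
  simpa only [neg_mul] using integral_gaussian b

theorem mul_sub_sq_add_mul_sub_sq {a b : ℝ} (hab : a + b ≠ 0) (u v x : ℝ) :
    a * (x - u) ^ 2 + b * (x - v) ^ 2 =
      a * b / (a + b) * (u - v) ^ 2 + (a + b) * (x - (a * u + b * v) / (a + b)) ^ 2 := by
  field_simp
  ring

theorem integral_exp_neg_mul_sub_sq_mul_exp {a b : ℝ} (hab : 0 < a + b) (u v : ℝ) :
    ∫ x : ℝ, exp (-(a * (x - u) ^ 2)) * exp (-(b * (x - v) ^ 2)) =
      exp (-(a * b / (a + b) * (u - v) ^ 2)) * √(π / (a + b)) := by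
  simp_rw [← exp_add, ← neg_add, mul_sub_sq_add_mul_sub_sq hab.ne', neg_add, exp_add]
  rw [integral_const_mul, integral_exp_neg_mul_sub_sq]

theorem integrable_exp_neg_mul_sub_sq_mul_exp {a b : ℝ} (hab : 0 < a + b) (u v : ℝ) :
    Integrable fun x : ℝ ↦ exp (-(a * (x - u) ^ 2)) * exp (-(b * (x - v) ^ 2)) := by
  simp_rw [← exp_add, ← neg_add, mul_sub_sq_add_mul_sub_sq hab.ne', neg_add, exp_add]
  exact (integrable_exp_neg_mul_sub_sq hab _).const_mul _

theorem sqrt_gpdf {σ : ℝ} (hσ : 0 < σ) (μ x : ℝ) :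
    √(gpdf μ σ x) = √(1 / (σ * √(2 * π))) * exp (-(1 / (4 * σ ^ 2) * (x - μ) ^ 2)) := by
  rw [gpdf, sqrt_mul (by positivity), ← exp_half]
  congr 2
  ring

theorem sqrt_gpdf_mul_sqrt_gpdf {σ₁ σ₂ : ℝ} (h₁ : 0 < σ₁) (h₂ : 0 < σ₂) (μ₁ μ₂ x : ℝ) :
    √(gpdf μ₁ σ₁ x) * √(gpdf μ₂ σ₂ x) =
      √(1 / (σ₁ * √(2 * π))) * √(1 / (σ₂ * √(2 * π))) *
        (exp (-(1 / (4 * σ₁ ^ 2) * (x - μ₁) ^ 2)) * exp (-(1 / (4 * σ₂ ^ 2) * (x - μ₂) ^ 2))) := by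
  rw [sqrt_gpdf h₁, sqrt_gpdf h₂]
  ring

theorem gpdf_nonneg {σ : ℝ} (hσ : 0 < σ) (μ x : ℝ) : 0 ≤ gpdf μ σ x := by
  rw [gpdf]
  positivity

theorem gpdf_eq_sqrt_gpdf_mul_sqrt_gpdf {σ : ℝ} (hσ : 0 < σ) (μ x : ℝ) :
    gpdf μ σ x = √(gpdf μ σ x) * √(gpdf μ σ x) :=
  (mul_self_sqrt (gpdf_nonneg hσ μ x)).symm

theorem integrable_sqrt_gpdf_mul_sqrt_gpdf {σ₁ σ₂ : ℝ} (h₁ : 0 < σ₁) (h₂ : 0 < σ₂)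
    (μ₁ μ₂ : ℝ) : Integrable fun x ↦ √(gpdf μ₁ σ₁ x) * √(gpdf μ₂ σ₂ x) := by
  simp_rw [sqrt_gpdf_mul_sqrt_gpdf h₁ h₂]
  exact (integrable_exp_neg_mul_sub_sq_mul_exp (by positivity) μ₁ μ₂).const_mul _

theorem integral_sqrt_gpdf_mul_sqrt_gpdf {σ₁ σ₂ : ℝ} (h₁ : 0 < σ₁) (h₂ : 0 < σ₂)
    (μ₁ μ₂ : ℝ) :
    ∫ x, √(gpdf μ₁ σ₁ x) * √(gpdf μ₂ σ₂ x) =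
      √(2 * σ₁ * σ₂ / (σ₁ ^ 2 + σ₂ ^ 2)) * exp (-(μ₁ - μ₂) ^ 2 / (4 * (σ₁ ^ 2 + σ₂ ^ 2))) := by
  simp_rw [sqrt_gpdf_mul_sqrt_gpdf h₁ h₂]
  rw [integral_const_mul, integral_exp_neg_mul_sub_sq_mul_exp (by positivity)]
  have h2π : √(2 * π) ^ 2 = 2 * π := sq_sqrt (by positivity)
  have hexp : -(1 / (4 * σ₁ ^ 2) * (1 / (4 * σ₂ ^ 2)) / (1 / (4 * σ₁ ^ 2) + 1 / (4 * σ₂ ^ 2)) *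
      (μ₁ - μ₂) ^ 2) = -(μ₁ - μ₂) ^ 2 / (4 * (σ₁ ^ 2 + σ₂ ^ 2)) := by
    field_simp
    ring
  have hconst : √(1 / (σ₁ * √(2 * π))) * √(1 / (σ₂ * √(2 * π))) *
      √(π / (1 / (4 * σ₁ ^ 2) + 1 / (4 * σ₂ ^ 2))) = √(2 * σ₁ * σ₂ / (σ₁ ^ 2 + σ₂ ^ 2)) := by
    rw [← sqrt_mul (by positivity), ← sqrt_mul (by positivity)]
    congr 1
    field_simp
    rw [h2π]
    ring
  rw [hexp, ← hconst]
  ring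

theorem integral_gpdf {σ : ℝ} (hσ : 0 < σ) (μ : ℝ) : ∫ x, gpdf μ σ x = 1 := by
  -- the mass of `p = √p · √p` is the case `μ₁ = μ₂`, `σ₁ = σ₂` of the previous integral
  rw [funext (gpdf_eq_sqrt_gpdf_mul_sqrt_gpdf hσ μ), integral_sqrt_gpdf_mul_sqrt_gpdf hσ hσ]
  have : 2 * σ * σ / (σ ^ 2 + σ ^ 2) = 1 := by field_simp; ring
  simp [this]

theorem integrable_gpdf {σ : ℝ} (hσ : 0 < σ) (μ : ℝ) : Integrable (gpdf μ σ) := by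
  rw [funext (gpdf_eq_sqrt_gpdf_mul_sqrt_gpdf hσ μ)]
  exact integrable_sqrt_gpdf_mul_sqrt_gpdf hσ hσ μ μ

theorem hellingerSqGaussian_eq {σ₁ σ₂ : ℝ} (h₁ : 0 < σ₁) (h₂ : 0 < σ₂) (μ₁ μ₂ : ℝ) :
    hellingerSqGaussian μ₁ σ₁ μ₂ σ₂ =
      1 - √(2 * σ₁ * σ₂ / (σ₁ ^ 2 + σ₂ ^ 2)) *
        exp (-(μ₁ - μ₂) ^ 2 / (4 * (σ₁ ^ 2 + σ₂ ^ 2))) := by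
  have expand : ∀ x, (√(gpdf μ₁ σ₁ x) - √(gpdf μ₂ σ₂ x)) ^ 2 =
      gpdf μ₁ σ₁ x + gpdf μ₂ σ₂ x - 2 * (√(gpdf μ₁ σ₁ x) * √(gpdf μ₂ σ₂ x)) := by
    intro x
    rw [sub_sq', sq_sqrt (gpdf_nonneg h₁ μ₁ x), sq_sqrt (gpdf_nonneg h₂ μ₂ x), mul_assoc]
  rw [hellingerSqGaussian, funext expand,
    integral_sub (f := fun x ↦ gpdf μ₁ σ₁ x + gpdf μ₂ σ₂ x)
      ((integrable_gpdf h₁ μ₁).add (integrable_gpdf h₂ μ₂))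
      ((integrable_sqrt_gpdf_mul_sqrt_gpdf h₁ h₂ μ₁ μ₂).const_mul 2),
    integral_add (integrable_gpdf h₁ μ₁) (integrable_gpdf h₂ μ₂), integral_const_mul,
    integral_gpdf h₁, integral_gpdf h₂, integral_sqrt_gpdf_mul_sqrt_gpdf h₁ h₂]
  ring

theorem sqrt_two_mul_mul_div_sq_add_sq_le_one (a b : ℝ) : √(2 * a * b / (a ^ 2 + b ^ 2)) ≤ 1 :=
  sqrt_le_one.mpr (div_le_one_of_le₀ (two_mul_le_add_sq a b) (by positivity))

theorem hellinger_gaussian_lower_bounds (μ₁ σ₁ μ₂ σ₂ : ℝ) (h₁ : 0 < σ₁) (h₂ : 0 < σ₂) :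
    hellingerSqGaussian μ₁ σ₁ μ₂ σ₂ ≥
        hellingerSqGaussian μ₁ (max σ₁ σ₂) μ₂ (max σ₁ σ₂) ∧
    hellingerSqGaussian μ₁ σ₁ μ₂ σ₂ ≥ hellingerSqGaussian 0 σ₁ 0 σ₂ := by
  have hmax : 0 < max σ₁ σ₂ := lt_max_of_lt_left h₁
  rw [ge_iff_le, ge_iff_le, hellingerSqGaussian_eq h₁ h₂, hellingerSqGaussian_eq hmax hmax,
    hellingerSqGaussian_eq h₁ h₂]
  constructor
  · have hcoeff := sqrt_two_mul_mul_div_sq_add_sq_le_one σ₁ σ₂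
    have hcoeff_max : 2 * max σ₁ σ₂ * max σ₁ σ₂ / (max σ₁ σ₂ ^ 2 + max σ₁ σ₂ ^ 2) = 1 := by
      field_simp
      ring
    have hvar : σ₁ ^ 2 + σ₂ ^ 2 ≤ max σ₁ σ₂ ^ 2 + max σ₁ σ₂ ^ 2 := by
      gcongr <;> simp
    rw [hcoeff_max, sqrt_one, one_mul]
    gcongr 1 - ?_
    calc _ ≤ 1 * exp (-(μ₁ - μ₂) ^ 2 / (4 * (σ₁ ^ 2 + σ₂ ^ 2))) := by gcongr
      _ ≤ _ := by
        rw [one_mul, neg_div, neg_div, exp_le_exp, neg_le_neg_iff]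
        gcongr
  · gcongr 1 - √_ * exp ?_
    rw [sub_self, zero_pow two_ne_zero, neg_zero, zero_div]
    exact div_nonpos_of_nonpos_of_nonneg (neg_nonpos.mpr (sq_nonneg (μ₁ - μ₂))) (by positivity)
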